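/- For 0 ≠ x ∈ ℝ^f with f ≥ 2, the quantity ξ(x) = min{t ≥ 0 : x + t𝟙 ∈ O_in^f} is given by the explicit formula ξ(x) = max{0, ‖x‖·α(𝟙ᵀx/(√f·‖x‖))}, where α(s) = (√((f−1)(1−s²)) − s)/√f, and ξ(0) = 0. -/

import Mathlib

noncomputable def onesVec (f : ℕ) : EuclideanSpace ℝ (Fin f) := WithLp.toLp 2 (fun _ => 1)

open RealInnerProductSpace

/-! Along the line `z = x + t𝟙` the Gram quantity `‖𝟙‖²‖z‖² - ⟪𝟙, z⟫²` does not change, and squaring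
shows that `z ∈ O_in^f` iff `√((f - 1)(f‖z‖² - ⟪𝟙, z⟫²)) ≤ ⟪𝟙, z⟫ = 𝟙ᵀx + t f`. Hence the admissible
`t ≥ 0` form the ray `[max 0 t₀, ∞)` with `t₀ = (√((f - 1)(f‖x‖² - (𝟙ᵀx)²)) - 𝟙ᵀx) / f`, and `t₀` is
`‖x‖ α(𝟙ᵀx / (√f ‖x‖))` rewritten. -/

theorem isLeast_nonneg_of_forall_iff {P : ℝ → Prop} {a : ℝ} (h : ∀ t, P t ↔ a ≤ t) :
    IsLeast {t | 0 ≤ t ∧ P t} (max 0 a) := by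
  have hset : {t | 0 ≤ t ∧ P t} = Set.Ici (max 0 a) := by
    ext t
    simp [h]
  exact hset ▸ isLeast_Ici

section Cone

variable {E : Type*} [NormedAddCommGroup E] [InnerProductSpace ℝ E] {w : E}

theorem gram_add_smul (w x : E) (t : ℝ) :
    ‖w‖ ^ 2 * ‖x + t • w‖ ^ 2 - ⟪w, x + t • w⟫ ^ 2 = ‖w‖ ^ 2 * ‖x‖ ^ 2 - ⟪w, x⟫ ^ 2 := by
  rw [norm_add_sq_real, inner_add_right, inner_smul_right, inner_smul_right,
    real_inner_self_eq_norm_sq, norm_smul, real_inner_comm, Real.norm_eq_abs, mul_pow, sq_abs]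
  ring

theorem sqrt_mul_norm_le_inner_iff (hw : w ≠ 0) (z : E) :
    √(‖w‖ ^ 2 - 1) * ‖z‖ ≤ ⟪w, z⟫ ↔
      √((‖w‖ ^ 2 - 1) * (‖w‖ ^ 2 * ‖z‖ ^ 2 - ⟪w, z⟫ ^ 2)) ≤ ⟪w, z⟫ := by
  have hW : 0 < ‖w‖ ^ 2 := by positivity
  have hlhs : √(‖w‖ ^ 2 - 1) * ‖z‖ = √((‖w‖ ^ 2 - 1) * ‖z‖ ^ 2) := by
    rw [Real.sqrt_mul' _ (sq_nonneg _), Real.sqrt_sq (norm_nonneg z)]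
  have hdiff : (‖w‖ ^ 2 - 1) * (‖w‖ ^ 2 * ‖z‖ ^ 2 - ⟪w, z⟫ ^ 2) - ⟪w, z⟫ ^ 2 =
      ‖w‖ ^ 2 * ((‖w‖ ^ 2 - 1) * ‖z‖ ^ 2 - ⟪w, z⟫ ^ 2) := by ring
  rw [hlhs, Real.sqrt_le_iff, Real.sqrt_le_iff, ← sub_nonpos (a := _ * (_ - _)), hdiff,
    ← sub_nonpos (a := _ * ‖z‖ ^ 2)]
  exact and_congr_right fun _ =>
    ⟨mul_nonpos_of_nonneg_of_nonpos hW.le, fun h => nonpos_of_mul_nonpos_right h hW⟩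

theorem sqrt_mul_norm_add_smul_le_inner_iff (hw : w ≠ 0) (x : E) (t : ℝ) :
    √(‖w‖ ^ 2 - 1) * ‖x + t • w‖ ≤ ⟪w, x + t • w⟫ ↔
      (√((‖w‖ ^ 2 - 1) * (‖w‖ ^ 2 * ‖x‖ ^ 2 - ⟪w, x⟫ ^ 2)) - ⟪w, x⟫) / ‖w‖ ^ 2 ≤ t := by
  have hW : 0 < ‖w‖ ^ 2 := by positivity
  rw [sqrt_mul_norm_le_inner_iff hw, gram_add_smul, div_le_iff₀ hW, inner_add_right,
    inner_smul_right, real_inner_self_eq_norm_sq, sub_le_iff_le_add']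

end Cone

theorem norm_onesVec_sq (f : ℕ) : ‖onesVec f‖ ^ 2 = f := by
  simp [EuclideanSpace.norm_sq_eq, onesVec]

theorem inner_onesVec (f : ℕ) (z : EuclideanSpace ℝ (Fin f)) : ⟪onesVec f, z⟫ = ∑ i, z i := by
  simp [onesVec, PiLp.inner_apply]

theorem onesVec_ne_zero {f : ℕ} (hf : f ≠ 0) : onesVec f ≠ 0 := by
  rw [← norm_ne_zero_iff, ← pow_ne_zero_iff two_ne_zero, norm_onesVec_sq]
  exact_mod_cast hf

theorem sqrt_mul_norm_le_sum_iff {f : ℕ} (hf : f ≠ 0) (x : EuclideanSpace ℝ (Fin f)) (t : ℝ) :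
    √((f : ℝ) - 1) * ‖x + t • onesVec f‖ ≤ ∑ i, (x + t • onesVec f) i ↔
      (√(((f : ℝ) - 1) * (f * ‖x‖ ^ 2 - (∑ i, x i) ^ 2)) - ∑ i, x i) / f ≤ t := by
  simpa only [norm_onesVec_sq, inner_onesVec] using
    sqrt_mul_norm_add_smul_le_inner_iff (onesVec_ne_zero hf) x t

/-- The left side is `n α(s / (√F n))` for the paper's `α(σ) = (√((F - 1)(1 - σ²)) - σ) / √F`. -/
theorem mul_alpha_eq {F n : ℝ} (hF : 0 < F) (hn : 0 < n) (s : ℝ) :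
    n * ((√((F - 1) * (1 - (s / (√F * n)) ^ 2)) - s / (√F * n)) / √F) =
      (√((F - 1) * (F * n ^ 2 - s ^ 2)) - s) / F := by
  have hsF2 : √F ^ 2 = F := Real.sq_sqrt hF.le
  have hFn : (F - 1) * (1 - (s / (√F * n)) ^ 2) = (F - 1) * (F * n ^ 2 - s ^ 2) / (√F * n) ^ 2 := by
    field_simp
    rw [hsF2]
  rw [hFn, Real.sqrt_div' _ (sq_nonneg _), Real.sqrt_sq (by positivity)]
  field_simp
  rw [hsF2]

theorem xi_formula_general (f : ℕ) (x : EuclideanSpace ℝ (Fin f)) (hx : x ≠ 0) :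
    IsLeast {t : ℝ | 0 ≤ t ∧ x + t • onesVec f ∈
        {z : EuclideanSpace ℝ (Fin f) | Real.sqrt ((f : ℝ) - 1) * ‖z‖ ≤ ∑ i, z i}}
      (max 0 (‖x‖ *
        ((Real.sqrt (((f : ℝ) - 1) * (1 - ((∑ i, x i) / (Real.sqrt f * ‖x‖)) ^ 2)) -
            (∑ i, x i) / (Real.sqrt f * ‖x‖)) / Real.sqrt f))) ∧
    IsLeast {t : ℝ | 0 ≤ t ∧ (0 : EuclideanSpace ℝ (Fin f)) + t • onesVec f ∈
        {z : EuclideanSpace ℝ (Fin f) | Real.sqrt ((f : ℝ) - 1) * ‖z‖ ≤ ∑ i, z i}}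
      0 := by
  have hf : f ≠ 0 := by
    rintro rfl
    exact hx (Subsingleton.elim _ _)
  refine ⟨?_, ⟨⟨le_rfl, by simp⟩, fun t ht => ht.1⟩⟩
  rw [mul_alpha_eq (by positivity) (norm_pos_iff.mpr hx)]
  exact isLeast_nonneg_of_forall_iff (sqrt_mul_norm_le_sum_iff hf x)

theorem xi_formula (f : ℕ) (hf : 2 ≤ f) (x : EuclideanSpace ℝ (Fin f)) (hx : x ≠ 0) :
    IsLeast {t : ℝ | 0 ≤ t ∧ x + t • onesVec f ∈
        {z : EuclideanSpace ℝ (Fin f) | Real.sqrt ((f : ℝ) - 1) * ‖z‖ ≤ ∑ i, z i}}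
      (max 0 (‖x‖ *
        ((Real.sqrt (((f : ℝ) - 1) * (1 - ((∑ i, x i) / (Real.sqrt f * ‖x‖)) ^ 2)) -
            (∑ i, x i) / (Real.sqrt f * ‖x‖)) / Real.sqrt f))) ∧
    IsLeast {t : ℝ | 0 ≤ t ∧ (0 : EuclideanSpace ℝ (Fin f)) + t • onesVec f ∈
        {z : EuclideanSpace ℝ (Fin f) | Real.sqrt ((f : ℝ) - 1) * ‖z‖ ≤ ∑ i, z i}}
      0 :=
  xi_formula_general f x hx
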